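/- Let (X,d) be a metric space and let S = (X,(φ_j)_{j=1}^L,(p_j)_{j=1}^L) be a GIFS with probabilities of order m in which each φ_j is an (a_0,...,a_{m−1})-contraction with Σ_{i=0}^{m−1} a_i < 1. Then the diagonal Markov operator M̄_S(μ) := M_S(μ, ..., μ) is a Banach contraction on compactly supported Borel probability measures with respect to d_MK, with Lipschitz constant at most Σ_{i=0}^{m−1} a_i: d_MK(M̄_S(μ), M̄_S(ν)) ≤ (Σ_{i=0}^{m−1} a_i) · d_MK(μ, ν). -/

import Mathlib

/-!
Both measures live on a common compact set `K`. For a 1-Lipschitz test function `f`,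
`∫ f dM̄(μ) = Σⱼ pⱼ ∫ f ∘ φⱼ dμ^m`, so it suffices to compare `∫ g dμ^m` and `∫ g dν^m` for
`g = f ∘ φⱼ`, which is `aᵢ`-Lipschitz in the `i`-th coordinate. Replacing the factors `μ` by `ν`
one coordinate at a time, each step integrates out the other coordinates and leaves an
`aᵢ`-Lipschitz function of one variable, whose integrals against `μ` and `ν` differ by at most
`aᵢ · d_MK(μ, ν)`.

Everything is transported to the compact subtype `K`: there the product σ-algebra on `K^m` is the
Borel one, so `f ∘ φⱼ` is measurable, whereas on a non-separable `X` the push-forwards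
`(μ^m).map φⱼ` could a priori be the junk value `0`.
-/

open MeasureTheory

/-- The Monge–Kantorovich (Hutchinson) distance between two measures. -/
noncomputable def dMK {X : Type*} [MetricSpace X] [MeasurableSpace X]
    (μ ν : Measure X) : ℝ :=
  sSup {s : ℝ | ∃ f : X → ℝ, LipschitzWith 1 f ∧ s = |∫ x, f x ∂μ - ∫ x, f x ∂ν|}

open scoped NNReal

theorem ContinuousOn.integrable_of_compl_null {X E : Type*} [TopologicalSpace X] [T2Space X]
    [MeasurableSpace X] [OpensMeasurableSpace X] [NormedAddCommGroup E] {μ : Measure X}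
    [IsFiniteMeasureOnCompacts μ] {K : Set X} {f : X → E} (hf : ContinuousOn f K)
    (hK : IsCompact K) (hμK : μ Kᶜ = 0) : Integrable f μ := by
  have h := hf.integrableOn_compact (μ := μ) hK
  rwa [IntegrableOn, Measure.restrict_eq_self_of_ae_mem (mem_ae_iff.2 hμK)] at h

theorem exists_isCompact_compl_null {X : Type*} [TopologicalSpace X] [MeasurableSpace X]
    {μ ν : Measure X} (hμ : ∃ K : Set X, IsCompact K ∧ μ Kᶜ = 0)
    (hν : ∃ K : Set X, IsCompact K ∧ ν Kᶜ = 0) :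
    ∃ K : Set X, IsCompact K ∧ μ Kᶜ = 0 ∧ ν Kᶜ = 0 := by
  obtain ⟨K₁, hK₁, hμK₁⟩ := hμ
  obtain ⟨K₂, hK₂, hνK₂⟩ := hν
  exact ⟨K₁ ∪ K₂, hK₁.union hK₂, measure_mono_null (by simp) hμK₁,
    measure_mono_null (by simp) hνK₂⟩

section MongeKantorovich

variable {X : Type*} [MetricSpace X] [MeasurableSpace X]

theorem dMK_le {μ ν : Measure X} {b : ℝ} (hb : 0 ≤ b)
    (h : ∀ f : X → ℝ, LipschitzWith 1 f → |∫ x, f x ∂μ - ∫ x, f x ∂ν| ≤ b) : dMK μ ν ≤ b :=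
  Real.sSup_le (by rintro s ⟨f, hf, rfl⟩; exact h f hf) hb

variable [BorelSpace X] {μ ν : Measure X} [IsProbabilityMeasure μ] [IsProbabilityMeasure ν]
  {K : Set X}

theorem abs_integral_sub_le_diam (hK : IsCompact K) (hμK : μ Kᶜ = 0) {x₀ : X} (hx₀ : x₀ ∈ K)
    {f : X → ℝ} (hf : LipschitzWith 1 f) : |∫ x, f x ∂μ - f x₀| ≤ Metric.diam K := by
  have hfi : Integrable f μ := hf.continuous.continuousOn.integrable_of_compl_null hK hμK
  have hbound : ∀ᵐ x ∂μ, ‖f x - f x₀‖ ≤ Metric.diam K := by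
    filter_upwards [mem_ae_iff.2 hμK] with x hx
    calc ‖f x - f x₀‖ = dist (f x) (f x₀) := (dist_eq_norm _ _).symm
      _ ≤ dist x x₀ := by simpa using hf.dist_le_mul x x₀
      _ ≤ Metric.diam K := Metric.dist_le_diam_of_mem hK.isBounded hx hx₀
  simpa [integral_sub hfi (integrable_const _)] using norm_integral_le_of_norm_le_const hbound

theorem IsCompact.nonempty_of_compl_null (hK : IsCompact K) (hμK : μ Kᶜ = 0) : K.Nonempty :=
  nonempty_of_measure_ne_zero (μ := μ) <| by
    simp [(prob_compl_eq_zero_iff hK.isClosed.measurableSet).1 hμK]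

theorem abs_integral_sub_le_dMK (hK : IsCompact K) (hμK : μ Kᶜ = 0) (hνK : ν Kᶜ = 0)
    {f : X → ℝ} (hf : LipschitzWith 1 f) : |∫ x, f x ∂μ - ∫ x, f x ∂ν| ≤ dMK μ ν := by
  obtain ⟨x₀, hx₀⟩ := hK.nonempty_of_compl_null hμK
  refine le_csSup ⟨2 * Metric.diam K, ?_⟩ ⟨f, hf, rfl⟩
  rintro s ⟨g, hg, rfl⟩
  calc |∫ x, g x ∂μ - ∫ x, g x ∂ν| ≤ |∫ x, g x ∂μ - g x₀| + |∫ x, g x ∂ν - g x₀| :=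
        (abs_sub_le _ (g x₀) _).trans_eq (by rw [abs_sub_comm (g x₀)])
    _ ≤ 2 * Metric.diam K := by
        linarith [abs_integral_sub_le_diam hK hμK hx₀ hg, abs_integral_sub_le_diam hK hνK hx₀ hg]

theorem dMK_nonneg (hK : IsCompact K) (hμK : μ Kᶜ = 0) (hνK : ν Kᶜ = 0) : 0 ≤ dMK μ ν :=
  (abs_nonneg _).trans (abs_integral_sub_le_dMK hK hμK hνK (LipschitzWith.const' (0 : ℝ)))

theorem abs_integral_sub_le_mul_dMK (hK : IsCompact K) (hμK : μ Kᶜ = 0) (hνK : ν Kᶜ = 0)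
    {c : ℝ≥0} {f : X → ℝ} (hf : LipschitzWith c f) :
    |∫ x, f x ∂μ - ∫ x, f x ∂ν| ≤ c * dMK μ ν := by
  rcases eq_or_ne c 0 with rfl | hc
  · obtain ⟨x₀, -⟩ := hK.nonempty_of_compl_null hμK
    have hconst : f = fun _ => f x₀ :=
      funext fun x => dist_le_zero.1 (by simpa using hf.dist_le_mul x x₀)
    rw [hconst]
    simp
  · have hg : LipschitzWith 1 fun x => (c⁻¹ : ℝ) • f x := by
      simpa [hc, Function.comp_def] using (lipschitzWith_smul ((c : ℝ)⁻¹)).comp hf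
    have h := abs_integral_sub_le_dMK hK hμK hνK hg
    rw [integral_smul, integral_smul, ← smul_sub, smul_eq_mul, abs_mul, abs_inv, NNReal.abs_eq,
      inv_mul_le_iff₀ (by positivity)] at h
    exact h

end MongeKantorovich

section ProductMeasure

variable {Y : Type*} [MeasurableSpace Y]

theorem measurable_fin_cons {n : ℕ} :
    Measurable fun z : Y × (Fin n → Y) => (Fin.cons z.1 z.2 : Fin (n + 1) → Y) :=
  measurable_pi_iff.2 fun i => Fin.cases (by simpa using measurable_fst)
    (fun j => by simpa using measurable_snd.eval (a := j)) i

theorem integral_pi_fin_succ (ρ : Measure Y) [SigmaFinite ρ] {n : ℕ}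
    (g : (Fin (n + 1) → Y) → ℝ) :
    ∫ x, g x ∂Measure.pi (fun _ => ρ) =
      ∫ z, g (Fin.cons z.1 z.2) ∂ρ.prod (Measure.pi fun _ : Fin n => ρ) := by
  rw [← (measurePreserving_piFinSuccAbove (fun _ => ρ) 0).symm.integral_comp']
  simp [MeasurableEquiv.piFinSuccAbove_symm_apply, Fin.insertNthEquiv, Fin.insertNth_zero']

variable {Z : Type*} [PseudoMetricSpace Z]

theorem lipschitzWith_integral {ν : Measure Y} [IsProbabilityMeasure ν] {c : ℝ≥0}
    {F : Z → Y → ℝ} (hF : ∀ y, LipschitzWith c fun z => F z y)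
    (hFi : ∀ z, Integrable (F z) ν) : LipschitzWith c fun z => ∫ y, F z y ∂ν :=
  LipschitzWith.of_dist_le_mul fun z z' => by
    rw [dist_eq_norm, ← integral_sub (hFi z) (hFi z')]
    simpa [← dist_eq_norm] using norm_integral_le_of_norm_le_const (μ := ν)
      (ae_of_all _ fun y => ((hF y).dist_le_mul z z').trans_eq' (dist_eq_norm _ _))

theorem abs_integral_sub_le_of_forall {ν : Measure Y} [IsProbabilityMeasure ν] {f h : Y → ℝ}
    (hf : Integrable f ν) (hh : Integrable h ν) {B : ℝ} (hB : ∀ y, |f y - h y| ≤ B) :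
    |∫ y, f y ∂ν - ∫ y, h y ∂ν| ≤ B := by
  rw [← integral_sub hf hh]
  simpa using norm_integral_le_of_norm_le_const (μ := ν)
    (ae_of_all _ fun y => (Real.norm_eq_abs _).trans_le (hB y))

end ProductMeasure

section Hybrid

variable {Y : Type*} [PseudoMetricSpace Y] [MeasurableSpace Y] {α β : Measure Y}
  [IsProbabilityMeasure α] [IsProbabilityMeasure β] {D : ℝ}

theorem abs_integral_pi_sub_le
    (hαβ : ∀ (c : ℝ≥0) (w : Y → ℝ), LipschitzWith c w → |∫ y, w y ∂α - ∫ y, w y ∂β| ≤ c * D) :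
    ∀ {n : ℕ} (a : Fin n → ℝ≥0) (g : (Fin n → Y) → ℝ), Measurable g → (∃ C, ∀ x, ‖g x‖ ≤ C) →
      (∀ x y, dist (g x) (g y) ≤ ∑ i, a i * dist (x i) (y i)) →
      |∫ x, g x ∂Measure.pi (fun _ => α) - ∫ x, g x ∂Measure.pi (fun _ => β)| ≤
        (∑ i, (a i : ℝ)) * D
  | 0, a, g, _, _, _ => by
    simp [Measure.pi_of_empty (fun _ : Fin 0 => α), Measure.pi_of_empty (fun _ : Fin 0 => β)]
  | n + 1, a, g, hgm, ⟨C, hC⟩, hg => by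
    set G : Y × (Fin n → Y) → ℝ := fun z => g (Fin.cons z.1 z.2)
    have hGm : Measurable G := hgm.comp measurable_fin_cons
    have hGi : ∀ (ρ : Measure (Y × (Fin n → Y))) [IsFiniteMeasure ρ], Integrable G ρ :=
      fun ρ _ => .of_bound hGm.aestronglyMeasurable C (ae_of_all _ fun _ => hC _)
    have hcons : ∀ x x' y y', dist (G (x, y)) (G (x', y')) ≤
        a 0 * dist x x' + ∑ i, a (Fin.succ i) * dist (y i) (y' i) := fun x x' y y' => by
      simpa [Fin.sum_univ_succ] using hg (Fin.cons x y) (Fin.cons x' y')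
    set w : Y → ℝ := fun x => ∫ y, G (x, y) ∂Measure.pi fun _ => α
    set v : Y → ℝ := fun x => ∫ y, G (x, y) ∂Measure.pi fun _ => β
    have hw : LipschitzWith (a 0) w := by
      refine lipschitzWith_integral (fun y => LipschitzWith.of_dist_le_mul fun x x' => ?_)
        (fun x => (hGi _).comp_measurable measurable_prodMk_left)
      simpa using hcons x x' y y
    have hwv : ∀ x, |w x - v x| ≤ (∑ i, (a (Fin.succ i) : ℝ)) * D := fun x =>
      abs_integral_pi_sub_le hαβ (a ∘ Fin.succ) (fun y => G (x, y))
        (hGm.comp measurable_prodMk_left) ⟨C, fun _ => hC _⟩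
        (fun y y' => by simpa using hcons x x y y')
    rw [integral_pi_fin_succ, integral_pi_fin_succ, integral_prod _ (hGi _),
      integral_prod _ (hGi _)]
    calc |∫ x, w x ∂α - ∫ x, v x ∂β|
        ≤ |∫ x, w x ∂α - ∫ x, w x ∂β| + |∫ x, w x ∂β - ∫ x, v x ∂β| := abs_sub_le _ _ _
      _ ≤ a 0 * D + (∑ i, (a (Fin.succ i) : ℝ)) * D :=
          add_le_add (hαβ _ w hw) (abs_integral_sub_le_of_forall
            (hGi _).integral_prod_left (hGi _).integral_prod_left hwv)
      _ = (∑ i, (a i : ℝ)) * D := by rw [Fin.sum_univ_succ, add_mul]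

end Hybrid

section CompactSupport

variable {X : Type*} [MeasurableSpace X] {μ : Measure X} {s : Set X}

theorem map_comap_subtype_val (hs : MeasurableSet s) (hμs : μ sᶜ = 0) :
    (μ.comap ((↑) : s → X)).map (↑) = μ := by
  rw [map_comap_subtype_coe hs, Measure.restrict_eq_self_of_ae_mem (mem_ae_iff.2 hμs)]

theorem isProbabilityMeasure_comap_subtype_val [IsProbabilityMeasure μ] (hs : MeasurableSet s)
    (hμs : μ sᶜ = 0) : IsProbabilityMeasure (μ.comap ((↑) : s → X)) := by
  have : IsProbabilityMeasure ((μ.comap ((↑) : s → X)).map ((↑) : s → X)) := by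
    rw [map_comap_subtype_val hs hμs]; infer_instance
  exact Measure.isProbabilityMeasure_of_map ((↑) : s → X)

theorem integral_comap_subtype_val (hs : MeasurableSet s) (hμs : μ sᶜ = 0) (f : X → ℝ) :
    ∫ x : s, f x ∂μ.comap (↑) = ∫ x, f x ∂μ := by
  rw [integral_subtype_comap hs, Measure.restrict_eq_self_of_ae_mem (mem_ae_iff.2 hμs)]

theorem measurableEmbedding_pi_subtype_val {ι : Type*} [Countable ι] (hs : MeasurableSet s) :
    MeasurableEmbedding fun (x : ι → s) i => (x i : X) := by
  have hS : MeasurableSet {x : ι → X | ∀ i, x i ∈ s} := by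
    rw [Set.ofPred_forall]
    exact MeasurableSet.iInter fun i => measurable_pi_apply i hs
  exact (MeasurableEmbedding.subtype_coe hS).comp
    (MeasurableEquiv.subtypePiEquivPi (p := fun _ x => x ∈ s)).symm.measurableEmbedding

theorem map_pi_eq_map_pi_comap {ι Z : Type*} [Fintype ι] [MeasurableSpace Z] [SigmaFinite μ]
    (hs : MeasurableSet s) (hμs : μ sᶜ = 0) {φ : (ι → X) → Z}
    (hφ : Measurable fun x : ι → s => φ fun i => x i) :
    (Measure.pi fun _ : ι => μ).map φ =
      (Measure.pi fun _ : ι => μ.comap ((↑) : s → X)).map fun x => φ fun i => x i := by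
  have hι := measurableEmbedding_pi_subtype_val (ι := ι) hs
  have hpi : (Measure.pi fun _ : ι => μ.comap ((↑) : s → X)).map (fun x i => (x i : X)) =
      Measure.pi fun _ : ι => μ :=
    (measurePreserving_pi _ _ fun _ =>
      ⟨measurable_subtype_coe, map_comap_subtype_val hs hμs⟩).map_eq
  rw [← hpi, AEMeasurable.map_map_of_aemeasurable (hι.aemeasurable_map_iff.2 hφ.aemeasurable)
    hι.measurable.aemeasurable]
  rfl

end CompactSupport

section CompactSubtype

variable {X : Type*} [MetricSpace X] [MeasurableSpace X] [BorelSpace X] {μ ν : Measure X}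
  [IsProbabilityMeasure μ] [IsProbabilityMeasure ν] {K : Set X}

theorem abs_integral_comap_sub_le_mul_dMK (hK : IsCompact K) (hμK : μ Kᶜ = 0) (hνK : ν Kᶜ = 0)
    {c : ℝ≥0} {w : K → ℝ} (hw : LipschitzWith c w) :
    |∫ x, w x ∂μ.comap (↑) - ∫ x, w x ∂ν.comap (↑)| ≤ c * dMK μ ν := by
  have hext : K.domRestrict (Function.extend Subtype.val w 0) = w :=
    funext fun x => Subtype.val_injective.extend_apply w 0 x
  obtain ⟨W, hW, hWw⟩ := (lipschitzOnWith_iff_restrict.2 (hext ▸ hw)).extend_real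
  have hWK : ∀ x : K, W x = w x := fun x => by
    rw [← hWw x.2, Subtype.val_injective.extend_apply]
  have hKm := hK.isClosed.measurableSet
  simpa only [← integral_comap_subtype_val hKm hμK, ← integral_comap_subtype_val hKm hνK, hWK]
    using abs_integral_sub_le_mul_dMK hK hμK hνK hW

theorem abs_integral_comp_pi_comap_sub_le (hK : IsCompact K) (hμK : μ Kᶜ = 0)
    (hνK : ν Kᶜ = 0) {m : ℕ} {a : Fin m → ℝ≥0} {ψ : (Fin m → K) → X} (hψ : Continuous ψ)
    (hψa : ∀ x y, dist (ψ x) (ψ y) ≤ ∑ i, a i * dist (x i) (y i)) {f : X → ℝ}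
    (hf : LipschitzWith 1 f) :
    |∫ x, f (ψ x) ∂Measure.pi (fun _ => μ.comap (↑)) -
        ∫ x, f (ψ x) ∂Measure.pi (fun _ => ν.comap (↑))| ≤ (∑ i, (a i : ℝ)) * dMK μ ν := by
  have hKm := hK.isClosed.measurableSet
  have : CompactSpace K := isCompact_iff_compactSpace.mp hK
  have := isProbabilityMeasure_comap_subtype_val hKm hμK
  have := isProbabilityMeasure_comap_subtype_val hKm hνK
  have hfψ : Continuous fun x => f (ψ x) := hf.continuous.comp hψ
  obtain ⟨C, hC⟩ := isCompact_univ.exists_bound_of_continuousOn hfψ.continuousOn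
  exact abs_integral_pi_sub_le (fun c w hw => abs_integral_comap_sub_le_mul_dMK hK hμK hνK hw)
    a _ hfψ.measurable ⟨C, fun x => hC x trivial⟩ fun x y =>
      (hf.dist_le_mul _ _).trans (by simpa using hψa x y)

end CompactSubtype

theorem abs_sum_mul_sub_sum_mul_le {ι : Type*} [Fintype ι] {p : ι → ℝ≥0} (hp : ∑ j, p j = 1)
    {x y : ι → ℝ} {B : ℝ} (h : ∀ j, |x j - y j| ≤ B) :
    |∑ j, (p j : ℝ) * x j - ∑ j, (p j : ℝ) * y j| ≤ B :=
  calc |∑ j, (p j : ℝ) * x j - ∑ j, (p j : ℝ) * y j|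
      ≤ ∑ j, (p j : ℝ) * |x j - y j| := by
        simpa only [← Finset.sum_sub_distrib, ← mul_sub, abs_mul, NNReal.abs_eq] using
          Finset.abs_sum_le_sum_abs (fun j => (p j : ℝ) * x j - (p j : ℝ) * y j) Finset.univ
    _ ≤ ∑ j, (p j : ℝ) * B := by gcongr with j; exact h j
    _ = B := by rw [← Finset.sum_mul, ← NNReal.coe_sum, hp, NNReal.coe_one, one_mul]

-- The paper's `M̄_S(μ) = M_S(μ, …, μ)` for the GIFSp `S = (φⱼ, pⱼ)`.
noncomputable def diagMarkov {ι Y X : Type*} [Fintype ι] [MeasurableSpace Y] [MeasurableSpace X]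
    {m : ℕ} (p : ι → ℝ≥0) (φ : ι → (Fin m → Y) → X) (μ : Measure Y) : Measure X :=
  ∑ j, p j • (Measure.pi fun _ : Fin m => μ).map (φ j)

section DiagMarkov

variable {ι Y X : Type*} [Fintype ι] [MeasurableSpace Y] [MeasurableSpace X] {m : ℕ}
  {p : ι → ℝ≥0} {φ : ι → (Fin m → Y) → X} {μ : Measure Y}

theorem diagMarkov_eq_comap [SigmaFinite μ] {s : Set Y} (hs : MeasurableSet s) (hμs : μ sᶜ = 0)
    (hφ : ∀ j, Measurable fun x : Fin m → s => φ j fun i => x i) :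
    diagMarkov p φ μ =
      diagMarkov p (fun j (x : Fin m → s) => φ j fun i => x i) (μ.comap ((↑) : s → Y)) :=
  Finset.sum_congr rfl fun j _ => by rw [map_pi_eq_map_pi_comap hs hμs (hφ j)]

theorem integral_diagMarkov (hφ : ∀ j, Measurable (φ j)) {f : X → ℝ} (hf : Measurable f)
    (hfi : ∀ j, Integrable (fun x => f (φ j x)) (Measure.pi fun _ => μ)) :
    ∫ x, f x ∂diagMarkov p φ μ = ∑ j, (p j : ℝ) * ∫ x, f (φ j x) ∂Measure.pi fun _ => μ := by
  rw [diagMarkov, integral_finsetSum_measure fun j _ => ((integrable_map_measure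
    hf.aestronglyMeasurable (hφ j).aemeasurable).2 (hfi j)).smul_measure_nnreal]
  refine Finset.sum_congr rfl fun j _ => ?_
  rw [integral_smul_nnreal_measure, integral_map (hφ j).aemeasurable hf.aestronglyMeasurable,
    NNReal.smul_def, smul_eq_mul]

end DiagMarkov

theorem stmt10_general {X : Type*} [MetricSpace X] [MeasurableSpace X] [BorelSpace X]
    {m L : ℕ}
    (φ : Fin L → (Fin m → X) → X) (hφc : ∀ j, Continuous (φ j))
    (p : Fin L → NNReal) (hp1 : ∑ j, p j = 1)
    (a : Fin m → ℝ) (ha : ∀ i, 0 ≤ a i)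
    (hφ : ∀ j, ∀ x y : Fin m → X,
      dist (φ j x) (φ j y) ≤ ∑ i, a i * dist (x i) (y i))
    (μ ν : Measure X) [IsProbabilityMeasure μ] [IsProbabilityMeasure ν]
    (hμ : ∃ K : Set X, IsCompact K ∧ μ Kᶜ = 0)
    (hν : ∃ K : Set X, IsCompact K ∧ ν Kᶜ = 0) :
    dMK (∑ j, p j • (Measure.pi fun _ : Fin m => μ).map (φ j))
        (∑ j, p j • (Measure.pi fun _ : Fin m => ν).map (φ j))
      ≤ (∑ i, a i) * dMK μ ν := by
  lift a to Fin m → ℝ≥0 using ha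
  obtain ⟨K, hK, hμK, hνK⟩ := exists_isCompact_compl_null hμ hν
  have hKm := hK.isClosed.measurableSet
  have : CompactSpace K := isCompact_iff_compactSpace.mp hK
  set ψ : Fin L → (Fin m → K) → X := fun j x => φ j fun i => x i
  have hψ : ∀ j, Continuous (ψ j) := fun j => (hφc j).comp (by fun_prop)
  change dMK (diagMarkov p φ μ) (diagMarkov p φ ν) ≤ _
  rw [diagMarkov_eq_comap hKm hμK fun j => (hψ j).measurable,
    diagMarkov_eq_comap hKm hνK fun j => (hψ j).measurable]
  refine dMK_le (mul_nonneg (by positivity) (dMK_nonneg hK hμK hνK)) fun f hf => ?_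
  have hfψ_int : ∀ (j) (ρ : Measure (Fin m → K)) [IsFiniteMeasure ρ],
      Integrable (fun x => f (ψ j x)) ρ := fun j ρ _ =>
    (hf.continuous.comp (hψ j)).continuousOn.integrable_of_compl_null isCompact_univ (by simp)
  rw [integral_diagMarkov (fun j => (hψ j).measurable) hf.continuous.measurable fun j => hfψ_int j _,
    integral_diagMarkov (fun j => (hψ j).measurable) hf.continuous.measurable fun j => hfψ_int j _]
  exact abs_sum_mul_sub_sum_mul_le hp1 fun j => abs_integral_comp_pi_comap_sub_le hK hμK hνK
    (hψ j) (fun x y => by simpa [ψ, Subtype.dist_eq] using hφ j _ _) hf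

/-- If a GIFS with probabilities consists of `(a_0, ..., a_{m-1})`-contractions
with `Σ aᵢ < 1`, then the diagonal Markov operator `μ ↦ M_S(μ, ..., μ)` is a
Banach contraction with constant at most `Σ aᵢ` for the Monge–Kantorovich
metric. -/
theorem stmt10 {X : Type*} [MetricSpace X] [MeasurableSpace X] [BorelSpace X]
    {m L : ℕ} (hm : 1 ≤ m) (hL : 0 < L)
    (φ : Fin L → (Fin m → X) → X) (hφc : ∀ j, Continuous (φ j))
    (p : Fin L → NNReal) (hp : ∀ j, 0 < p j) (hp1 : ∑ j, p j = 1)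
    (a : Fin m → ℝ) (ha : ∀ i, 0 ≤ a i) (ha1 : ∑ i, a i < 1)
    (hφ : ∀ j, ∀ x y : Fin m → X,
      dist (φ j x) (φ j y) ≤ ∑ i, a i * dist (x i) (y i))
    (μ ν : Measure X) [IsProbabilityMeasure μ] [IsProbabilityMeasure ν]
    (hμ : ∃ K : Set X, IsCompact K ∧ μ Kᶜ = 0)
    (hν : ∃ K : Set X, IsCompact K ∧ ν Kᶜ = 0) :
    dMK (∑ j, p j • (Measure.pi fun _ : Fin m => μ).map (φ j))
        (∑ j, p j • (Measure.pi fun _ : Fin m => ν).map (φ j))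
      ≤ (∑ i, a i) * dMK μ ν :=
  stmt10_general φ hφc p hp1 a ha hφ μ ν hμ hν
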